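/- arXiv:2501.00558 — 3 statements merged into one kernel-verified Lean document; each statement's English description precedes it below -/
import Mathlib

section
/- For all real u with 0 < u ≤ ν·a (where a > 0 and ν ≥ 1 is real), one has 0 ≤ exp(-u/a) - (1 - u/(ν a))^ν ≤ u²·exp(-u/a)/(ν a²). -/
open Real

theorem askey_exp_superinequalities (a ν u : ℝ) (ha : 0 < a) (hν : 1 ≤ ν)
    (hu : 0 < u) (hua : u ≤ ν * a) :
    0 ≤ Real.exp (-u / a) - (1 - u / (ν * a)) ^ ν ∧
    Real.exp (-u / a) - (1 - u / (ν * a)) ^ ν ≤ u ^ 2 * Real.exp (-u / a) / (ν * a ^ 2) := by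
  have hν0 : (0:ℝ) < ν := lt_of_lt_of_le one_pos hν
  have hνa : 0 < ν * a := mul_pos hν0 ha
  set x := u / (ν * a) with hxdef
  have hx0 : 0 < x := div_pos hu hνa
  have hx1 : x ≤ 1 := (div_le_one hνa).mpr hua
  have hbase : 0 ≤ 1 - x := by linarith
  have hexp_eq : Real.exp (-u / a) = Real.exp (-x) ^ ν := by
    rw [← Real.exp_mul]
    congr 1
    rw [hxdef]
    field_simp
  have h1x : 1 - x ≤ Real.exp (-x) := by
    have := Real.add_one_le_exp (-x); linarith
  have h1 : (1 - x) ^ ν ≤ Real.exp (-x) ^ ν :=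
    Real.rpow_le_rpow hbase h1x hν0.le
  have hsq : 0 ≤ 1 - x ^ 2 := by nlinarith
  have hmid : Real.exp (-x) * (1 - x ^ 2) ≤ 1 - x := by
    have h2 : Real.exp (-x) * (1 + x) ≤ 1 := by
      have h3 : 1 + x ≤ Real.exp x := by linarith [Real.add_one_le_exp x]
      have h4 : Real.exp (-x) * (1 + x) ≤ Real.exp (-x) * Real.exp x :=
        mul_le_mul_of_nonneg_left h3 (Real.exp_pos _).le
      rwa [← Real.exp_add, neg_add_cancel, Real.exp_zero] at h4
    nlinarith [Real.exp_pos (-x)]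
  have hmidnn : 0 ≤ Real.exp (-x) * (1 - x ^ 2) :=
    mul_nonneg (Real.exp_pos _).le hsq
  have h5 : (Real.exp (-x) * (1 - x ^ 2)) ^ ν ≤ (1 - x) ^ ν :=
    Real.rpow_le_rpow hmidnn hmid hν0.le
  have h6 : (Real.exp (-x) * (1 - x ^ 2)) ^ ν
      = Real.exp (-x) ^ ν * (1 - x ^ 2) ^ ν :=
    Real.mul_rpow (Real.exp_pos _).le hsq
  have hbern : 1 + ν * (-(x ^ 2)) ≤ (1 + -(x ^ 2)) ^ ν :=
    one_add_mul_self_le_rpow_one_add (by nlinarith) hν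
  have h7 : Real.exp (-x) ^ ν * (1 - ν * x ^ 2) ≤ (1 - x) ^ ν := by
    calc Real.exp (-x) ^ ν * (1 - ν * x ^ 2)
        ≤ Real.exp (-x) ^ ν * (1 - x ^ 2) ^ ν := by
          apply mul_le_mul_of_nonneg_left _ (Real.rpow_nonneg (Real.exp_pos _).le ν)
          have : (1:ℝ) - x ^ 2 = 1 + -(x ^ 2) := by ring
          rw [this]
          have : (1:ℝ) - ν * x ^ 2 = 1 + ν * (-(x ^ 2)) := by ring
          rw [this]; exact hbern
      _ = (Real.exp (-x) * (1 - x ^ 2)) ^ ν := h6.symm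
      _ ≤ (1 - x) ^ ν := h5
  constructor
  · rw [hexp_eq]; linarith
  · rw [hexp_eq]
    have hrhs : u ^ 2 * (Real.exp (-x) ^ ν) / (ν * a ^ 2)
        = Real.exp (-x) ^ ν * (ν * x ^ 2) := by
      rw [hxdef]
      field_simp
    rw [hrhs]
    nlinarith [h7]
end

section
/- Let d ≥ 1 be an integer and a > 0. Applying the turning bands operator twice, first from dimension d+4 to d+2 and then to d, to C(h)=exp(-h/a), yields exp(-h/a)·(1 - h(2d+3)/(a d (d+2)) + h²/(a² d (d+2))) for h > 0. -/
/-!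
For `h > 0` and `f` differentiable at `h`, the product rule turns the turning bands operator into
the first-order differential operator `T_m[f](h) = f(h) + h f'(h) / m`. Applied to the exponential
this gives `T_{d+2}[exp(-·/a)](t) = exp(-t/a) (1 - t / (a (d + 2)))` on `t > 0`; differentiating
this once more and applying `T_d` yields the hole effect polynomial.
-/

noncomputable def turningBands (m : ℕ) (f : ℝ → ℝ) : ℝ → ℝ :=
  fun h => (m : ℝ)⁻¹ * h ^ ((1 : ℝ) - m) * deriv (fun t : ℝ => t ^ (m : ℝ) * f t) h

open Filter Topology

theorem turningBands_apply_of_hasDerivAt {m : ℕ} (hm : m ≠ 0) {f : ℝ → ℝ} {f' h : ℝ}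
    (hh : 0 < h) (hf : HasDerivAt f f' h) :
    turningBands m f h = f h + h * f' / m := by
  have hpow : HasDerivAt (fun t : ℝ => t ^ (m : ℝ)) (m * h ^ ((m : ℝ) - 1)) h :=
    Real.hasDerivAt_rpow_const (Or.inl hh.ne')
  have hm' : (m : ℝ) ≠ 0 := Nat.cast_ne_zero.mpr hm
  have hpow_pred : h ^ ((1 : ℝ) - m) * h ^ ((m : ℝ) - 1) = 1 := by
    rw [← Real.rpow_add hh]; norm_num
  have hpow_self : h ^ ((1 : ℝ) - m) * h ^ (m : ℝ) = h := by
    rw [← Real.rpow_add hh]; norm_num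
  have hprod : HasDerivAt (fun t => t ^ (m : ℝ) * f t) _ h := hpow.mul hf
  rw [turningBands, hprod.deriv]
  field_simp
  linear_combination (m * f h) * hpow_pred + f' * hpow_self

theorem hasDerivAt_exp_neg_div (a h : ℝ) :
    HasDerivAt (fun t => Real.exp (-t / a)) (-Real.exp (-h / a) / a) h := by
  simpa [neg_div, div_eq_mul_inv] using ((hasDerivAt_id h).neg.div_const a).exp

theorem turningBands_exp {m : ℕ} (hm : m ≠ 0) (a : ℝ) {t : ℝ} (ht : 0 < t) :
    turningBands m (fun s => Real.exp (-s / a)) t = Real.exp (-t / a) * (1 - t / (a * m)) := by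
  rw [turningBands_apply_of_hasDerivAt hm ht (hasDerivAt_exp_neg_div a t)]
  ring

theorem turningBands_twice_exp_general (d : ℕ) (hd : 1 ≤ d) (a : ℝ)
    (h : ℝ) (hh : 0 < h) :
    turningBands d (turningBands (d + 2) (fun t => Real.exp (-t / a))) h
      = Real.exp (-h / a)
          * (1 - h * (2 * d + 3) / (a * d * (d + 2)) + h ^ 2 / (a ^ 2 * d * (d + 2))) := by
  have hd0 : d ≠ 0 := by omega
  set g := fun t => Real.exp (-t / a) * (1 - t / (a * ((d + 2 : ℕ) : ℝ)))
  have hinner : turningBands (d + 2) (fun t => Real.exp (-t / a)) =ᶠ[𝓝 h] g := by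
    filter_upwards [Ioi_mem_nhds hh] with t ht using turningBands_exp (by omega) a ht
  have hg : HasDerivAt g (-Real.exp (-h / a) / a * (1 - h / (a * ((d + 2 : ℕ) : ℝ)))
      + Real.exp (-h / a) * -(1 / (a * ((d + 2 : ℕ) : ℝ)))) h :=
    (hasDerivAt_exp_neg_div a h).mul (((hasDerivAt_id' h).div_const _).const_sub 1)
  rw [turningBands_apply_of_hasDerivAt hd0 hh (hg.congr_of_eventuallyEq hinner),
    hinner.eq_of_nhds]
  simp only [g]
  push_cast
  field_simp
  ring

theorem turningBands_twice_exp (d : ℕ) (hd : 1 ≤ d) (a : ℝ) (ha : 0 < a)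
    (h : ℝ) (hh : 0 < h) :
    turningBands d (turningBands (d + 2) (fun t => Real.exp (-t / a))) h
      = Real.exp (-h / a)
          * (1 - h * (2 * d + 3) / (a * d * (d + 2)) + h ^ 2 / (a ^ 2 * d * (d + 2))) :=
  turningBands_twice_exp_general d hd a h hh
end

section
/- Let d ≥ 1 be an integer, a > 0, ν real. Applying the turning bands operator from dimension d+4 to d+2 and then from d+2 to d to the Askey function C(h) = (1-h/a)^ν on (0,a) gives (1-h/a)^{ν-2}·[1 - (2 + ν(2d+3)/(d(d+2)))·(h/a) + (h/a)²·(1 + ν(2d+ν+2)/(d(d+2)))]. -/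
lemma key_deriv (a μ e : ℝ) (ha : 0 < a) {t : ℝ} (ht : 0 < t) (hta : t < a) :
    HasDerivAt (fun t : ℝ => t ^ e * (1 - t / a) ^ μ)
      (e * t ^ (e - 1) * (1 - t / a) ^ μ
        + t ^ e * (μ * (1 - t / a) ^ (μ - 1) * (-(1 / a)))) t := by
  have h1 : HasDerivAt (fun t : ℝ => t ^ e) (e * t ^ (e - 1)) t :=
    Real.hasDerivAt_rpow_const (Or.inl ht.ne')
  have h2 : HasDerivAt (fun t : ℝ => 1 - t / a) (-(1 / a)) t := by
    simpa using ((hasDerivAt_id t).div_const a).const_sub 1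
  have hne : (1 : ℝ) - t / a ≠ 0 := by
    have : t / a < 1 := (div_lt_one ha).mpr hta
    linarith
  have h3 : HasDerivAt (fun t : ℝ => (1 - t / a) ^ μ)
      (μ * (1 - t / a) ^ (μ - 1) * (-(1 / a))) t := by
    have := h2.rpow_const (p := μ) (Or.inl hne)
    convert this using 1
    ring
  exact h1.mul h3

theorem turningBands_twice_askey (d : ℕ) (hd : 1 ≤ d) (a ν : ℝ) (ha : 0 < a)
    (h : ℝ) (h0 : 0 < h) (hha : h < a) :
    turningBands d (turningBands (d + 2) (fun t => (1 - t / a) ^ ν)) h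
      = (1 - h / a) ^ (ν - 2)
          * (1 - (2 + ν * (2 * d + 3) / (d * (d + 2))) * (h / a)
              + (h / a) ^ 2 * (1 + ν * (2 * d + ν + 2) / (d * (d + 2)))) := by
  have hdne : (d : ℝ) ≠ 0 := Nat.cast_ne_zero.mpr (by omega)
  have hd2 : ((d : ℝ) + 2) ≠ 0 := by positivity
  set c : ℝ := ν / (((d : ℝ) + 2) * a) with hc
  have hinner : ∀ t ∈ Set.Ioo (0 : ℝ) a,
      turningBands (d + 2) (fun t => (1 - t / a) ^ ν) t
        = (1 - t / a) ^ ν - c * (t * (1 - t / a) ^ (ν - 1)) := by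
    rintro t ⟨ht0, hta⟩
    have hcast : ((d + 2 : ℕ) : ℝ) = (d : ℝ) + 2 := by push_cast; ring
    unfold turningBands
    rw [hcast, (key_deriv a ν ((d : ℝ) + 2) ha ht0 hta).deriv]
    have e1 : t ^ ((d : ℝ) + 2 - 1) = t ^ ((d : ℝ) + 2) / t := by
      rw [Real.rpow_sub ht0, Real.rpow_one]
    have e2 : t ^ ((1 : ℝ) - ((d : ℝ) + 2)) = t / t ^ ((d : ℝ) + 2) := by
      rw [Real.rpow_sub ht0, Real.rpow_one]
    rw [e1, e2, hc]
    have hP : (0 : ℝ) < t ^ ((d : ℝ) + 2) := Real.rpow_pos_of_pos ht0 _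
    generalize (1 - t / a) ^ ν = A
    generalize (1 - t / a) ^ (ν - 1) = B
    generalize hPP : t ^ ((d : ℝ) + 2) = P at hP
    field_simp
    ring
  have hfun : (fun t : ℝ => t ^ ((d : ℕ) : ℝ)
        * turningBands (d + 2) (fun t => (1 - t / a) ^ ν) t)
      =ᶠ[nhds h] fun t : ℝ => t ^ ((d : ℝ)) * (1 - t / a) ^ ν
        - c * (t ^ ((d : ℝ) + 1) * (1 - t / a) ^ (ν - 1)) := by
    filter_upwards [Ioo_mem_nhds h0 hha] with t ht
    rw [hinner t ht]
    have : t ^ ((d : ℝ)) * t = t ^ ((d : ℝ) + 1) := by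
      rw [Real.rpow_add_one ht.1.ne']
    rw [← this]; ring
  have hD : HasDerivAt (fun t : ℝ => t ^ ((d : ℝ)) * (1 - t / a) ^ ν
        - c * (t ^ ((d : ℝ) + 1) * (1 - t / a) ^ (ν - 1)))
      ((d : ℝ) * h ^ ((d : ℝ) - 1) * (1 - h / a) ^ ν
          + h ^ ((d : ℝ)) * (ν * (1 - h / a) ^ (ν - 1) * (-(1 / a)))
        - c * (((d : ℝ) + 1) * h ^ ((d : ℝ) + 1 - 1) * (1 - h / a) ^ (ν - 1)
          + h ^ ((d : ℝ) + 1) * ((ν - 1) * (1 - h / a) ^ (ν - 1 - 1) * (-(1 / a))))) h :=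
    (key_deriv a ν (d : ℝ) ha h0 hha).sub
      ((key_deriv a (ν - 1) ((d : ℝ) + 1) ha h0 hha).const_mul c)
  show (d : ℝ)⁻¹ * h ^ ((1 : ℝ) - (d : ℕ)) * _ = _
  rw [hfun.deriv_eq, hD.deriv]
  have hs : (0 : ℝ) < 1 - h / a := by
    have : h / a < 1 := (div_lt_one ha).mpr hha
    linarith
  have hH : (0 : ℝ) < h ^ ((d : ℝ)) := Real.rpow_pos_of_pos h0 _
  have p1 : h ^ ((d : ℝ) - 1) = h ^ ((d : ℝ)) / h := by
    rw [Real.rpow_sub h0, Real.rpow_one]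
  have p2 : h ^ ((d : ℝ) + 1 - 1) = h ^ ((d : ℝ)) := by norm_num
  have p3 : h ^ ((d : ℝ) + 1) = h ^ ((d : ℝ)) * h := Real.rpow_add_one h0.ne' _
  have p4 : h ^ ((1 : ℝ) - (d : ℝ)) = h / h ^ ((d : ℝ)) := by
    rw [Real.rpow_sub h0, Real.rpow_one]
  have es1 : (1 - h / a) ^ ν = (1 - h / a) ^ (ν - 2) * (1 - h / a) ^ 2 := by
    rw [← Real.rpow_natCast (1 - h / a) 2, ← Real.rpow_add hs]; norm_num
  have es2 : (1 - h / a) ^ (ν - 1) = (1 - h / a) ^ (ν - 2) * (1 - h / a) := by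
    have hh : ν - 1 = (ν - 2) + 1 := by ring
    rw [hh, Real.rpow_add_one hs.ne']
  have es3 : ν - 1 - 1 = ν - 2 := by ring
  rw [p1, p2, p3, p4, es1, es2, es3, hc]
  have hane : a ≠ 0 := ha.ne'
  generalize (1 - h / a) ^ (ν - 2) = S
  generalize hPP : h ^ ((d : ℝ)) = P at hH
  field_simp
  ring
end
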